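/- arXiv:2410.05519 — 5 statements merged into one kernel-verified Lean document; each statement's English description precedes it below -/
import Mathlib

section
/- For every positive natural number m and every m-th root of unity ζ in ℂ, the function ω : ZMod m × ZMod m × ZMod m → ℂˣ defined by ω(i,j,k) = ζ^(i.val * ((j.val + k.val) / m)) (where / is natural number division, so (j.val + k.val)/m ∈ {0,1} records the carry) satisfies the 3-cocycle condition: ω(g₁+g₂, g₃, g₄) · ω(g₁, g₂, g₃+g₄) = ω(g₁, g₂, g₃) · ω(g₁, g₂+g₃, g₄) · ω(g₂, g₃, g₄) for all g₁,g₂,g₃,g₄ ∈ ZMod m. -/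
theorem three_cocycle_condition (m : ℕ) (hm : 0 < m) (ζ : ℂ) (hζ : ζ ^ m = 1)
    (ω : ZMod m → ZMod m → ZMod m → ℂ)
    (hω : ∀ i j k : ZMod m, ω i j k = ζ ^ (i.val * ((j.val + k.val) / m)))
    (g₁ g₂ g₃ g₄ : ZMod m) :
    ω (g₁ + g₂) g₃ g₄ * ω g₁ g₂ (g₃ + g₄) =
      ω g₁ g₂ g₃ * ω g₁ (g₂ + g₃) g₄ * ω g₂ g₃ g₄ := by
  haveI : NeZero m := ⟨hm.ne'⟩
  have hz : ∀ n : ℕ, ζ ^ n = ζ ^ (n % m) := by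
    intro n
    conv_lhs => rw [← Nat.mod_add_div n m]
    rw [pow_add, pow_mul, hζ, one_pow, mul_one]
  simp only [hω, ZMod.val_add]
  rw [← pow_add, ← pow_add, ← pow_add]
  conv_lhs => rw [hz]
  conv_rhs => rw [hz]
  congr 1
  set a := g₁.val
  set b := g₂.val
  set c := g₃.val
  set d := g₄.val
  set q := (c + d) / m with hq
  set r := (b + (c + d) % m) / m with hr
  set s := (b + c) / m with hs
  set t := ((b + c) % m + d) / m with ht
  have h1 : (b + (c + d) % m) + m * ((c + d) / m) = b + c + d := by
    have := Nat.mod_add_div (c + d) m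
    omega
  have h2 : ((b + c) % m + d) + m * ((b + c) / m) = b + c + d := by
    have := Nat.mod_add_div (b + c) m
    omega
  have hq1 : r + q = (b + c + d) / m := by
    rw [← h1, Nat.add_mul_div_left _ _ hm, hr, hq]
  have hq2 : t + s = (b + c + d) / m := by
    rw [← h2, Nat.add_mul_div_left _ _ hm, ht, hs]
  have hqr : q + r = s + t := by omega
  have hmod : ((a + b) % m * q + a * r) ≡ ((a + b) * q + a * r) [MOD m] :=
    Nat.ModEq.add_right _ (Nat.ModEq.mul_right _ (Nat.mod_modEq _ m))
  have heq : (a + b) * q + a * r = a * s + a * t + b * q := by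
    have e1 : (a + b) * q = a * q + b * q := add_mul a b q
    have e2 : a * (q + r) = a * q + a * r := mul_add a q r
    have e3 : a * (s + t) = a * s + a * t := mul_add a s t
    have e4 : a * (q + r) = a * (s + t) := by rw [hqr]
    omega
  calc ((a + b) % m * q + a * r) % m = ((a + b) * q + a * r) % m := hmod
    _ = (a * s + a * t + b * q) % m := by rw [heq]
end

section
/- Let m ≥ 1 and let t : ZMod m → ℝ be a strictly positive function and d ∈ ℝ such that d · t(v) = t(v+1) + t(v-1) for all v ∈ ZMod m. Then d = 2 and t is constant. -/
theorem perron_frobenius_cycle (m : ℕ) (hm : 1 ≤ m) (t : ZMod m → ℝ)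
    (ht : ∀ v, 0 < t v) (d : ℝ)
    (h : ∀ v : ZMod m, d * t v = t (v + 1) + t (v - 1)) :
    d = 2 ∧ ∀ v w : ZMod m, t v = t w := by
  haveI : NeZero m := ⟨Nat.one_le_iff_ne_zero.mp hm⟩
  -- sum argument for d = 2
  have hsum : ∑ v : ZMod m, d * t v = ∑ v : ZMod m, (t (v + 1) + t (v - 1)) := by
    exact Finset.sum_congr rfl fun v _ => h v
  have h1 : ∑ v : ZMod m, t (v + 1) = ∑ v : ZMod m, t v :=
    Fintype.sum_equiv (Equiv.addRight 1) _ _ fun v => rfl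
  have h2 : ∑ v : ZMod m, t (v - 1) = ∑ v : ZMod m, t v :=
    Fintype.sum_equiv (Equiv.subRight 1) _ _ fun v => rfl
  have hSpos : 0 < ∑ v : ZMod m, t v := by
    apply Finset.sum_pos (fun v _ => ht v)
    exact Finset.univ_nonempty
  have hd : d = 2 := by
    have : d * ∑ v : ZMod m, t v = 2 * ∑ v : ZMod m, t v := by
      rw [Finset.mul_sum, hsum, Finset.sum_add_distrib, h1, h2]; ring
    exact mul_right_cancel₀ (ne_of_gt hSpos) this
  subst hd
  refine ⟨rfl, ?_⟩
  -- minimum argument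
  obtain ⟨v₀, -, hv₀⟩ := Finset.exists_min_image Finset.univ t Finset.univ_nonempty
  have hmin : ∀ w, t v₀ ≤ t w := fun w => hv₀ w (Finset.mem_univ w)
  have step : ∀ w : ZMod m, t w = t v₀ → t (w + 1) = t v₀ := by
    intro w hw
    have h' := h w
    have h1 : t v₀ ≤ t (w + 1) := hmin _
    have h2 : t v₀ ≤ t (w - 1) := hmin _
    have : t (w + 1) ≤ t v₀ := by nlinarith
    linarith
  have key : ∀ n : ℕ, t (v₀ + n) = t v₀ := by
    intro n
    induction n with
    | zero => simp
    | succ k ih =>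
      have := step (v₀ + k) ih
      rw [← this]
      push_cast
      ring_nf
  have hall : ∀ v : ZMod m, t v = t v₀ := by
    intro v
    have := key (v - v₀).val
    rwa [ZMod.natCast_val, ZMod.cast_id, add_sub_cancel] at this
  intro v w
  rw [hall v, hall w]
end

section
/- Suppose t : ℤ → ℝ is strictly positive and d ∈ ℝ satisfies d · t(k) = t(k+1) + t(k-1) for all k ∈ ℤ. Then d ≥ 2. -/
/-!
If `d < 2`, the ratios `r n = u (n + 1) / u n` of a positive solution of
`d * u (n + 1) = u (n + 2) + u n` satisfy `r (n + 1) = d - (r n)⁻¹`, and since `x + x⁻¹ ≥ 2`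
for `x > 0` they drop by at least `2 - d` at every step, so they cannot all stay positive.
-/

lemma two_le_add_inv_self {x : ℝ} (hx : 0 < x) : 2 ≤ x + x⁻¹ := by
  have key : x + x⁻¹ - 2 = (x - 1) ^ 2 / x := by field_simp; ring
  nlinarith [div_nonneg (sq_nonneg (x - 1)) hx.le]

lemma exists_nonpos_of_le_sub {r : ℕ → ℝ} {ε : ℝ} (hε : 0 < ε)
    (h : ∀ n, r (n + 1) ≤ r n - ε) : ∃ n, r n ≤ 0 := by
  have le_sub_mul : ∀ n : ℕ, r n ≤ r 0 - n * ε := by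
    intro n
    induction n with
    | zero => simp
    | succ n ih => push_cast; linarith [h n]
  obtain ⟨n, hn⟩ := exists_nat_gt (r 0 / ε)
  refine ⟨n, (le_sub_mul n).trans ?_⟩
  rw [div_lt_iff₀ hε] at hn
  linarith

theorem two_le_of_pos_of_add_eq_mul {u : ℕ → ℝ} (hu : ∀ n, 0 < u n) {d : ℝ}
    (h : ∀ n, d * u (n + 1) = u (n + 2) + u n) : 2 ≤ d := by
  by_contra! hd
  set r : ℕ → ℝ := fun n ↦ u (n + 1) / u n
  have ratio_succ (n : ℕ) : r (n + 1) = d - (r n)⁻¹ := by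
    have := hu n
    have := hu (n + 1)
    simp only [r, inv_div]
    field_simp
    linarith [h n]
  have ratio_drop (n : ℕ) : r (n + 1) ≤ r n - (2 - d) := by
    have := two_le_add_inv_self (div_pos (hu (n + 1)) (hu n))
    rw [ratio_succ]
    linarith
  obtain ⟨n, hn⟩ := exists_nonpos_of_le_sub (sub_pos.mpr hd) ratio_drop
  exact hn.not_gt (div_pos (hu (n + 1)) (hu n))

theorem eigenvalue_bound_infinite_path (t : ℤ → ℝ) (ht : ∀ k, 0 < t k) (d : ℝ)
    (h : ∀ k : ℤ, d * t k = t (k + 1) + t (k - 1)) : 2 ≤ d :=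
  two_le_of_pos_of_add_eq_mul (u := fun n ↦ t n) (fun n ↦ ht n) fun n ↦ by
    simpa [add_assoc] using h (n + 1)
end

section
/- Let σ : Matrix (Fin 2) (Fin 2) ℂ → Matrix (Fin 2) (Fin 2) ℂ be an anti-automorphism of algebras with σ ∘ σ = id (i.e., σ is ℂ-linear, bijective, σ(1) = 1, σ(XY) = σ(Y)σ(X), and σ² = id). Then there exist nonzero R, Q ∈ Matrix (Fin 2) (Fin 2) ℂ with R² = R, Q² = Q, R·Q = 0, Q·R = 0, R + Q = 1, and either (σ(R) = R and σ(Q) = Q) or (σ(R) = Q and σ(Q) = R). -/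
open Matrix

lemma aux_construct
    (σ : Matrix (Fin 2) (Fin 2) ℂ → Matrix (Fin 2) (Fin 2) ℂ)
    (hlin : ∀ (c : ℂ) (x y : Matrix (Fin 2) (Fin 2) ℂ), σ (c • x + y) = c • σ x + σ y)
    (hone : σ 1 = 1)
    (hmul : ∀ x y : Matrix (Fin 2) (Fin 2) ℂ, σ (x * y) = σ y * σ x)
    (hinv : ∀ x : Matrix (Fin 2) (Fin 2) ℂ, σ (σ x) = x)
    (F : Matrix (Fin 2) (Fin 2) ℂ)
    (hrank : ∀ A : Matrix (Fin 2) (Fin 2) ℂ, F * A * F = (Matrix.trace (A * F)) • F)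
    (hs : Matrix.trace (σ F * F) ≠ 0) :
    ∃ R Q : Matrix (Fin 2) (Fin 2) ℂ, R ≠ 0 ∧ Q ≠ 0 ∧
      R * R = R ∧ Q * Q = Q ∧ R * Q = 0 ∧ Q * R = 0 ∧ R + Q = 1 ∧
      ((σ R = R ∧ σ Q = Q) ∨ (σ R = Q ∧ σ Q = R)) := by
  have h0 : σ 0 = 0 := by
    have h := hlin 1 0 0
    simp at h
    exact h
  have hsmul : ∀ (c : ℂ) x, σ (c • x) = c • σ x := by
    intro c x
    have h := hlin c x 0
    simpa [h0] using h
  have hsub : ∀ x y, σ (x - y) = σ x - σ y := by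
    intro x y
    have h := hlin (-1) y x
    rw [neg_one_smul, neg_one_smul, ← sub_eq_neg_add, ← sub_eq_neg_add] at h
    exact h
  set s := Matrix.trace (σ F * F) with hs_def
  set M := σ F * F with hM_def
  have hM2 : M * M = s • M := by
    have h1 : F * (σ F) * F = s • F := hrank (σ F)
    calc M * M = σ F * (F * σ F * F) := by
          rw [hM_def]; rw [Matrix.mul_assoc]; rw [← Matrix.mul_assoc F (σ F) F]
      _ = σ F * (s • F) := by rw [h1]
      _ = s • M := by rw [Matrix.mul_smul, hM_def]
  have hσM : σ M = M := by
    rw [hM_def, hmul, hinv]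
  set R := s⁻¹ • M with hR_def
  have hRR : R * R = R := by
    rw [hR_def, Matrix.smul_mul, Matrix.mul_smul, hM2, smul_smul, smul_smul]
    congr 1
    field_simp
  have htrR : Matrix.trace R = 1 := by
    rw [hR_def, Matrix.trace_smul, ← hs_def]
    simp [inv_mul_cancel₀ hs]
  have hσR : σ R = R := by
    rw [hR_def, hsmul, hσM]
  have hRne : R ≠ 0 := by
    intro h
    rw [h] at htrR
    simp at htrR
  have hQne : (1 : Matrix (Fin 2) (Fin 2) ℂ) - R ≠ 0 := by
    intro h
    have : Matrix.trace (1 - R : Matrix (Fin 2) (Fin 2) ℂ) = (0 : ℂ) := by rw [h]; simp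
    rw [Matrix.trace_sub, Matrix.trace_one, htrR] at this
    norm_num at this
  refine ⟨R, 1 - R, hRne, hQne, hRR, ?_, ?_, ?_, by abel, Or.inl ⟨hσR, ?_⟩⟩
  · rw [sub_mul, mul_sub, mul_sub, hRR, one_mul, mul_one]
    simp
  · rw [mul_sub, hRR, mul_one, sub_self]
  · rw [sub_mul, hRR, one_mul, sub_self]
  · rw [hsub, hone, hσR]

theorem anti_involution_idempotents
    (σ : Matrix (Fin 2) (Fin 2) ℂ → Matrix (Fin 2) (Fin 2) ℂ)
    (hlin : ∀ (c : ℂ) (x y : Matrix (Fin 2) (Fin 2) ℂ), σ (c • x + y) = c • σ x + σ y)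
    (hbij : Function.Bijective σ)
    (hone : σ 1 = 1)
    (hmul : ∀ x y : Matrix (Fin 2) (Fin 2) ℂ, σ (x * y) = σ y * σ x)
    (hinv : ∀ x : Matrix (Fin 2) (Fin 2) ℂ, σ (σ x) = x) :
    ∃ R Q : Matrix (Fin 2) (Fin 2) ℂ, R ≠ 0 ∧ Q ≠ 0 ∧
      R * R = R ∧ Q * Q = Q ∧ R * Q = 0 ∧ Q * R = 0 ∧ R + Q = 1 ∧
      ((σ R = R ∧ σ Q = Q) ∨ (σ R = Q ∧ σ Q = R)) := by
  have h0 : σ 0 = 0 := by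
    have h := hlin 1 0 0
    simp at h
    exact h
  have hsmul : ∀ (c : ℂ) x, σ (c • x) = c • σ x := by
    intro c x
    have h := hlin c x 0
    simpa [h0] using h
  have hsub : ∀ x y, σ (x - y) = σ x - σ y := by
    intro x y
    have h := hlin (-1) y x
    rw [neg_one_smul, neg_one_smul, ← sub_eq_neg_add, ← sub_eq_neg_add] at h
    exact h
  have hrF : ∀ (t : ℂ) (A : Matrix (Fin 2) (Fin 2) ℂ),
      !![1,t;0,0] * A * !![1,t;0,0] = (Matrix.trace (A * !![1,t;0,0])) • !![1,t;0,0] := by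
    intro t A
    ext i j
    fin_cases i <;> fin_cases j <;>
      simp [Matrix.mul_apply, Matrix.vecMul, dotProduct, Fin.sum_univ_two,
        Matrix.trace_fin_two] <;>
      first | ring1 | exact Or.inl (by ring1) | exact Or.inl trivial
  have hrG : ∀ (t : ℂ) (A : Matrix (Fin 2) (Fin 2) ℂ),
      !![1,0;t,0] * A * !![1,0;t,0] = (Matrix.trace (A * !![1,0;t,0])) • !![1,0;t,0] := by
    intro t A
    ext i j
    fin_cases i <;> fin_cases j <;>
      simp [Matrix.mul_apply, Matrix.vecMul, dotProduct, Fin.sum_univ_two,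
        Matrix.trace_fin_two] <;>
      first | ring1 | exact Or.inl (by ring1) | exact Or.inl trivial
  rcases eq_or_ne (Matrix.trace (σ !![(1:ℂ),0;0,0] * !![(1:ℂ),0;0,0])) 0 with hz | hnz
  swap
  · exact aux_construct σ hlin hone hmul hinv _ (hrF 0) hnz
  set P := σ !![(1:ℂ),0;0,0] with hPdef
  have hP2 : P * P = P := by
    have hEE : (!![(1:ℂ),0;0,0] : Matrix (Fin 2) (Fin 2) ℂ) * !![(1:ℂ),0;0,0]
        = !![(1:ℂ),0;0,0] := by
      ext i j
      fin_cases i <;> fin_cases j <;> simp [Matrix.mul_apply, Fin.sum_univ_two]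
    have h := hmul !![(1:ℂ),0;0,0] !![(1:ℂ),0;0,0]
    rw [hEE, ← hPdef] at h
    exact h.symm
  have h00 : P 0 0 = 0 := by
    have h : Matrix.trace (P * !![(1:ℂ),0;0,0]) = P 0 0 := by
      simp [Matrix.trace_fin_two, Matrix.mul_apply, Fin.sum_univ_two]
    rw [← h]
    exact hz
  have q00 : P 0 0 * P 0 0 + P 0 1 * P 1 0 = P 0 0 := by
    have h := congrFun (congrFun hP2 0) 0
    simpa [Matrix.mul_apply, Fin.sum_univ_two] using h
  have q01 : P 0 0 * P 0 1 + P 0 1 * P 1 1 = P 0 1 := by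
    have h := congrFun (congrFun hP2 0) 1
    simpa [Matrix.mul_apply, Fin.sum_univ_two] using h
  have q10 : P 1 0 * P 0 0 + P 1 1 * P 1 0 = P 1 0 := by
    have h := congrFun (congrFun hP2 1) 0
    simpa [Matrix.mul_apply, Fin.sum_univ_two] using h
  have q11 : P 1 0 * P 0 1 + P 1 1 * P 1 1 = P 1 1 := by
    have h := congrFun (congrFun hP2 1) 1
    simpa [Matrix.mul_apply, Fin.sum_univ_two] using h
  have hbc : P 0 1 * P 1 0 = 0 := by
    linear_combination q00 + (1 - P 0 0) * h00
  have hPne : P ≠ 0 := by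
    intro h
    have hE0 : (!![(1:ℂ),0;0,0] : Matrix (Fin 2) (Fin 2) ℂ) = 0 := by
      apply hbij.1
      rw [h0, ← hPdef]
      exact h
    have h2 := congrFun (congrFun hE0 0) 0
    simp at h2
  have hd1 : P 1 1 = 1 := by
    rcases eq_or_ne (P 1 1) 0 with hd | hd
    · exfalso
      have hb0 : P 0 1 = 0 := by
        linear_combination -q01 + P 0 1 * h00 + P 0 1 * hd
      have hc0 : P 1 0 = 0 := by
        linear_combination -q10 + P 1 0 * h00 + P 1 0 * hd
      apply hPne
      ext i j
      fin_cases i <;> fin_cases j <;> simp [h00, hb0, hc0, hd]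
    · have hd2 : P 1 1 * P 1 1 = P 1 1 * 1 := by
        rw [mul_one]
        linear_combination q11 - hbc
      exact mul_left_cancel₀ hd hd2
  rcases eq_or_ne (P 0 1) 0 with hb | hb
  · rcases eq_or_ne (P 1 0) 0 with hc | hc
    · -- σ(e11) = e22 : swap case
      have hPval : P = !![(0:ℂ),0;0,1] := by
        ext i j
        fin_cases i <;> fin_cases j <;> simp [h00, hb, hc, hd1]
      have hQE : (!![(0:ℂ),0;0,1] : Matrix (Fin 2) (Fin 2) ℂ) = 1 - !![(1:ℂ),0;0,0] := by
        ext i j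
        fin_cases i <;> fin_cases j <;> simp [Matrix.one_apply]
      have hσQ : σ !![(0:ℂ),0;0,1] = !![(1:ℂ),0;0,0] := by
        rw [hQE, hsub, hone, ← hPdef, hPval]
        ext i j
        fin_cases i <;> fin_cases j <;> simp [Matrix.one_apply]
      refine ⟨!![(1:ℂ),0;0,0], !![(0:ℂ),0;0,1], ?_, ?_, ?_, ?_, ?_, ?_, ?_,
        Or.inr ⟨by rw [← hPdef, hPval], hσQ⟩⟩
      · intro h
        have h2 := congrFun (congrFun h 0) 0
        simp at h2
      · intro h
        have h2 := congrFun (congrFun h 1) 1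
        simp at h2
      all_goals
        ext i j
        fin_cases i <;> fin_cases j <;>
          simp [Matrix.mul_apply, Fin.sum_univ_two, Matrix.one_apply]
    · -- P 1 0 ≠ 0
      set B := σ !![(0:ℂ),1;0,0] with hBdef
      have hB : B = (1 - P) * B := by
        have h1 : σ (!![(0:ℂ),0;0,1]) = 1 - P := by
          have e : (!![(0:ℂ),0;0,1] : Matrix (Fin 2) (Fin 2) ℂ) = 1 - !![(1:ℂ),0;0,0] := by
            ext i j
            fin_cases i <;> fin_cases j <;> simp [Matrix.one_apply]
          rw [e, hsub, hone, ← hPdef]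
        have h2 : (!![(0:ℂ),1;0,0] : Matrix (Fin 2) (Fin 2) ℂ) * !![(0:ℂ),0;0,1]
            = !![(0:ℂ),1;0,0] := by
          ext i j
          fin_cases i <;> fin_cases j <;> simp [Matrix.mul_apply, Fin.sum_univ_two]
        have h := hmul !![(0:ℂ),1;0,0] !![(0:ℂ),0;0,1]
        rw [h2, h1, ← hBdef] at h
        exact h
      have hB10 : B 1 0 = -(P 1 0 * B 0 0) := by
        have h := congrFun (congrFun hB 1) 0
        simp [Matrix.mul_apply, Fin.sum_univ_two, Matrix.sub_apply, Matrix.one_apply, hd1] at h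
        linear_combination h
      have hdec : ∀ t : ℂ, (t • !![(0:ℂ),1;0,0] + !![(1:ℂ),0;0,0] : Matrix (Fin 2) (Fin 2) ℂ)
          = !![1,t;0,0] := by
        intro t
        ext i j
        fin_cases i <;> fin_cases j <;> simp
      have hσF : ∀ t : ℂ, σ !![1,t;0,0] = t • B + P := by
        intro t
        rw [← hdec t, hlin, ← hBdef, ← hPdef]
      have hst : ∀ t : ℂ, Matrix.trace (σ !![1,t;0,0] * !![1,t;0,0])
          = t * B 0 0 + t * (t * B 1 0 + P 1 0) := by
        intro t
        rw [hσF]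
        simp [Matrix.trace_fin_two, Matrix.mul_apply, Fin.sum_univ_two, h00]
        ring
      rcases eq_or_ne (Matrix.trace (σ !![(1:ℂ),1;0,0] * !![(1:ℂ),1;0,0])) 0 with hz1 | hnz1
      swap
      · exact aux_construct σ hlin hone hmul hinv _ (hrF 1) hnz1
      rcases eq_or_ne (Matrix.trace (σ !![(1:ℂ),-1;0,0] * !![(1:ℂ),-1;0,0])) 0 with hz2 | hnz2
      swap
      · exact aux_construct σ hlin hone hmul hinv _ (hrF (-1)) hnz2
      exfalso
      rw [hst 1] at hz1
      rw [hst (-1)] at hz2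
      have h1 : B 1 0 = 0 := by
        linear_combination (1/2 : ℂ) * hz1 + (1/2 : ℂ) * hz2
      have h2 : B 0 0 = -P 1 0 := by
        linear_combination (1/2 : ℂ) * hz1 - (1/2 : ℂ) * hz2
      have h3 : P 1 0 * P 1 0 = 0 := by
        rw [h1, h2] at hB10
        linear_combination -hB10
      exact hc (mul_self_eq_zero.mp h3)
  · -- P 0 1 ≠ 0
    set C := σ !![(0:ℂ),0;1,0] with hCdef
    have hC : C = C * (1 - P) := by
      have h1 : σ (!![(0:ℂ),0;0,1]) = 1 - P := by
        have e : (!![(0:ℂ),0;0,1] : Matrix (Fin 2) (Fin 2) ℂ) = 1 - !![(1:ℂ),0;0,0] := by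
          ext i j
          fin_cases i <;> fin_cases j <;> simp [Matrix.one_apply]
        rw [e, hsub, hone, ← hPdef]
      have h2 : (!![(0:ℂ),0;0,1] : Matrix (Fin 2) (Fin 2) ℂ) * !![(0:ℂ),0;1,0]
          = !![(0:ℂ),0;1,0] := by
        ext i j
        fin_cases i <;> fin_cases j <;> simp [Matrix.mul_apply, Fin.sum_univ_two]
      have h := hmul !![(0:ℂ),0;0,1] !![(0:ℂ),0;1,0]
      rw [h2, h1, ← hCdef] at h
      exact h
    have hC01 : C 0 1 = -(P 0 1 * C 0 0) := by
      have h := congrFun (congrFun hC 0) 1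
      simp [Matrix.mul_apply, Fin.sum_univ_two, Matrix.sub_apply, Matrix.one_apply, hd1] at h
      linear_combination h
    have hdec : ∀ t : ℂ, (t • !![(0:ℂ),0;1,0] + !![(1:ℂ),0;0,0] : Matrix (Fin 2) (Fin 2) ℂ)
        = !![1,0;t,0] := by
      intro t
      ext i j
      fin_cases i <;> fin_cases j <;> simp
    have hσG : ∀ t : ℂ, σ !![1,0;t,0] = t • C + P := by
      intro t
      rw [← hdec t, hlin, ← hCdef, ← hPdef]
    have hst : ∀ t : ℂ, Matrix.trace (σ !![1,0;t,0] * !![1,0;t,0])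
        = t * C 0 0 + t * (t * C 0 1 + P 0 1) := by
      intro t
      rw [hσG]
      simp [Matrix.trace_fin_two, Matrix.mul_apply, Fin.sum_univ_two, h00]
      ring
    rcases eq_or_ne (Matrix.trace (σ !![(1:ℂ),0;1,0] * !![(1:ℂ),0;1,0])) 0 with hz1 | hnz1
    swap
    · exact aux_construct σ hlin hone hmul hinv _ (hrG 1) hnz1
    rcases eq_or_ne (Matrix.trace (σ !![(1:ℂ),0;-1,0] * !![(1:ℂ),0;-1,0])) 0 with hz2 | hnz2
    swap
    · exact aux_construct σ hlin hone hmul hinv _ (hrG (-1)) hnz2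
    exfalso
    rw [hst 1] at hz1
    rw [hst (-1)] at hz2
    have h1 : C 0 1 = 0 := by
      linear_combination (1/2 : ℂ) * hz1 + (1/2 : ℂ) * hz2
    have h2 : C 0 0 = -P 0 1 := by
      linear_combination (1/2 : ℂ) * hz1 - (1/2 : ℂ) * hz2
    have h3 : P 0 1 * P 0 1 = 0 := by
      rw [h1, h2] at hC01
      linear_combination -hC01
    exact hb (mul_self_eq_zero.mp h3)
end

section
/- For every natural number k, the number of pairs (p, q) of functions Fin k → {+1, −1} such that all partial sums of p are nonnegative, all partial sums of q are nonnegative, and the total sum of p equals the total sum of q, is equal to the Catalan number C_k = (1/(k+1))·binom(2k, k). -/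
/-!
Append to `p` the path `q` read backwards, i.e. the steps `-q (k-1), …, -q 0`. Since `p` and `q`
end at the same height, the result is a path of length `2k` from `0` back to `0`, and its heights
after the midpoint are exactly the heights of `q`; so it stays `≥ 0` iff both `p` and `q` do.
Conversely every such path splits at its midpoint into a unique pair `(p, q)`. These paths are
the Dyck words of semilength `k`, which are counted by `catalan k`.
-/

open List DyckStep

namespace List

variable {G : Type*} [AddCommGroup G]

def reverseNeg (l : List G) : List G := (l.map fun x => -x).reverse

@[simp]
lemma length_reverseNeg (l : List G) : (reverseNeg l).length = l.length := by
  simp [reverseNeg]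

@[simp]
lemma mem_reverseNeg {l : List G} {x : G} : x ∈ reverseNeg l ↔ -x ∈ l := by
  simp [reverseNeg, neg_eq_iff_eq_neg]

@[simp]
lemma sum_reverseNeg (l : List G) : (reverseNeg l).sum = -l.sum :=
  (sum_neg_reverse l).symm

@[simp]
lemma reverseNeg_reverseNeg (l : List G) : reverseNeg (reverseNeg l) = l := by
  simp [reverseNeg, map_reverse]

lemma reverseNeg_append (l₁ l₂ : List G) :
    reverseNeg (l₁ ++ l₂) = reverseNeg l₂ ++ reverseNeg l₁ := by
  simp [reverseNeg]

lemma sum_take_reverseNeg (l : List G) (j : ℕ) :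
    ((reverseNeg l).take j).sum = (l.take (l.length - j)).sum - l.sum := by
  rw [reverseNeg, take_reverse, length_map, ← map_drop, ← sum_neg_reverse,
    ← sum_take_add_sum_drop l (l.length - j)]
  abel

lemma exists_ofFn_eq {α : Type*} {n : ℕ} {l : List α} (h : l.length = n) :
    ∃ f : Fin n → α, ofFn f = l := by
  subst h
  exact ⟨_, ofFn_getElem⟩

end List

def IsBallot (l : List ℤ) : Prop := (∀ x ∈ l, x = 1 ∨ x = -1) ∧ ∀ j, 0 ≤ (l.take j).sum

namespace IsBallot

variable {l : List ℤ}

lemma take (hl : IsBallot l) (n : ℕ) : IsBallot (l.take n) :=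
  ⟨fun x hx => hl.1 x (mem_of_mem_take hx), fun j => by rw [take_take]; exact hl.2 _⟩

lemma reverseNeg (hl : IsBallot l) (h0 : l.sum = 0) : IsBallot (reverseNeg l) := by
  refine ⟨fun x hx => ?_, fun j => ?_⟩
  · have := hl.1 _ (mem_reverseNeg.1 hx)
    omega
  · rw [sum_take_reverseNeg, h0, sub_zero]
    exact hl.2 _

end IsBallot

lemma isBallot_append_reverseNeg_iff {P Q : List ℤ} (h : P.sum = Q.sum) :
    IsBallot (P ++ reverseNeg Q) ↔ IsBallot P ∧ IsBallot Q := by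
  constructor
  · intro hl
    -- reading the whole path backwards swaps the roles of `P` and `Q`
    have hQ : IsBallot (reverseNeg (P ++ reverseNeg Q)) :=
      hl.reverseNeg (by simp [h])
    rw [reverseNeg_append, reverseNeg_reverseNeg] at hQ
    exact ⟨by simpa using hl.take P.length, by simpa using hQ.take Q.length⟩
  · rintro ⟨hP, hQ⟩
    refine ⟨fun x hx => ?_, fun j => ?_⟩
    · rcases mem_append.1 hx with hx | hx
      · exact hP.1 x hx
      · have := hQ.1 _ (mem_reverseNeg.1 hx)
        omega
    · rw [take_append, sum_append, sum_take_reverseNeg]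
      rcases le_total j P.length with hj | hj
      · rw [Nat.sub_eq_zero_of_le hj, Nat.sub_zero, take_length]
        simpa using hP.2 j
      · rw [take_of_length_le hj, h]
        simpa using hQ.2 _

lemma isBallot_ofFn_iff {n : ℕ} (f : Fin n → ℤ) :
    IsBallot (ofFn f) ↔ (∀ i, f i = 1 ∨ f i = -1) ∧
      ∀ j : ℕ, 0 ≤ ∑ i ∈ Finset.univ.filter (fun i : Fin n => (i : ℕ) < j), f i := by
  simp only [IsBallot, forall_mem_ofFn_iff, sum_take_ofFn]

namespace DyckStep

def toInt : DyckStep → ℤ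
  | U => 1
  | D => -1

lemma toInt_injective : Function.Injective toInt := by
  rintro (_ | _) (_ | _) h <;> first | rfl | simp [toInt] at h

lemma sum_map_toInt (l : List DyckStep) : (l.map toInt).sum = l.count U - l.count D := by
  induction l with
  | nil => simp
  | cons s l ih => cases s <;> simp [toInt, ih] <;> ring

lemma isBallot_map_toInt_iff (l : List DyckStep) :
    IsBallot (l.map toInt) ↔ ∀ i, (l.take i).count D ≤ (l.take i).count U := by
  simp only [IsBallot, ← map_take, sum_map_toInt, sub_nonneg, Nat.cast_le, mem_map,
    forall_exists_index, and_imp, forall_apply_eq_imp_iff₂]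
  exact and_iff_right fun s _ => by cases s <;> simp [toInt]

end DyckStep

namespace DyckWord

def toInts (w : DyckWord) : List ℤ := w.toList.map toInt

lemma toInts_injective : Function.Injective toInts := fun _ _ h =>
  DyckWord.ext (map_injective_iff.2 toInt_injective h)

lemma length_toInts (w : DyckWord) : w.toInts.length = 2 * w.semilength := by
  rw [toInts, length_map, two_mul_semilength_eq_length]

lemma sum_toInts (w : DyckWord) : w.toInts.sum = 0 := by
  rw [toInts, sum_map_toInt, w.count_U_eq_count_D, sub_self]

lemma isBallot_toInts (w : DyckWord) : IsBallot w.toInts :=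
  (isBallot_map_toInt_iff _).2 w.count_D_le_count_U

lemma exists_toInts_eq {l : List ℤ} (hl : IsBallot l) (h0 : l.sum = 0) :
    ∃ w : DyckWord, w.toInts = l := by
  let s := l.map fun x => if x = 1 then U else D
  have hs : s.map toInt = l := by
    rw [map_map]
    refine (map_congr_left fun x hx => ?_).trans (map_id l)
    rcases hl.1 x hx with rfl | rfl <;> rfl
  rw [← hs] at hl h0
  rw [isBallot_map_toInt_iff] at hl
  rw [sum_map_toInt, sub_eq_zero, Nat.cast_inj] at h0
  exact ⟨⟨s, h0, hl⟩, hs⟩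

end DyckWord

lemma card_dyckWord_semilength_eq_card_isBallot (k : ℕ) :
    Nat.card {w : DyckWord // w.semilength = k} =
      Nat.card {l : List ℤ // l.length = 2 * k ∧ IsBallot l ∧ l.sum = 0} := by
  refine Nat.card_eq_of_bijective
    (fun w => ⟨w.1.toInts, by rw [w.1.length_toInts, w.2], w.1.isBallot_toInts, w.1.sum_toInts⟩)
    ⟨fun w w' h => Subtype.ext (DyckWord.toInts_injective (congrArg Subtype.val h)), ?_⟩
  rintro ⟨l, hlen, hl, h0⟩
  obtain ⟨w, rfl⟩ := DyckWord.exists_toInts_eq hl h0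
  exact ⟨⟨w, by rw [w.length_toInts] at hlen; omega⟩, rfl⟩

lemma card_isBallot_pairs_eq_card_isBallot (k : ℕ) :
    Nat.card {pq : (Fin k → ℤ) × (Fin k → ℤ) //
      IsBallot (ofFn pq.1) ∧ IsBallot (ofFn pq.2) ∧ (ofFn pq.1).sum = (ofFn pq.2).sum} =
      Nat.card {l : List ℤ // l.length = 2 * k ∧ IsBallot l ∧ l.sum = 0} := by
  refine Nat.card_eq_of_bijective
    (fun pq => ⟨ofFn pq.1.1 ++ reverseNeg (ofFn pq.1.2), by simp [two_mul],
      (isBallot_append_reverseNeg_iff pq.2.2.2).2 ⟨pq.2.1, pq.2.2.1⟩, by simp [pq.2.2.2]⟩)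
    ⟨?_, ?_⟩
  · rintro ⟨⟨p, q⟩, _⟩ ⟨⟨p', q'⟩, _⟩ h
    obtain ⟨hp, hq⟩ := append_inj (congrArg Subtype.val h) (by simp)
    have hq' : ofFn q = ofFn q' := by simpa using congrArg reverseNeg hq
    simp only [Subtype.mk.injEq, Prod.mk.injEq]
    exact ⟨ofFn_injective hp, ofFn_injective hq'⟩
  · rintro ⟨l, hlen, hl, h0⟩
    obtain ⟨p, hp⟩ := exists_ofFn_eq (n := k) (l := l.take k) (by rw [length_take]; omega)
    obtain ⟨q, hq⟩ := exists_ofFn_eq (n := k) (l := reverseNeg (l.drop k))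
      (by rw [length_reverseNeg, length_drop]; omega)
    have hl' : l = ofFn p ++ reverseNeg (ofFn q) := by
      rw [hp, hq, reverseNeg_reverseNeg, take_append_drop]
    have hsum : (ofFn p).sum = (ofFn q).sum := by
      rw [hp, hq, sum_reverseNeg, eq_neg_iff_add_eq_zero, sum_take_add_sum_drop, h0]
    rw [hl', isBallot_append_reverseNeg_iff hsum] at hl
    exact ⟨⟨(p, q), hl.1, hl.2, hsum⟩, Subtype.ext hl'.symm⟩

theorem dim_TL_eq_catalan (k : ℕ) :
    Nat.card {pq : (Fin k → ℤ) × (Fin k → ℤ) //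
      (∀ i, pq.1 i = 1 ∨ pq.1 i = -1) ∧
      (∀ i, pq.2 i = 1 ∨ pq.2 i = -1) ∧
      (∀ j : ℕ, 0 ≤ ∑ i ∈ Finset.univ.filter (fun i : Fin k => (i : ℕ) < j), pq.1 i) ∧
      (∀ j : ℕ, 0 ≤ ∑ i ∈ Finset.univ.filter (fun i : Fin k => (i : ℕ) < j), pq.2 i) ∧
      (∑ i, pq.1 i = ∑ i, pq.2 i)} = catalan k := by
  rw [← DyckWord.card_dyckWord_semilength_eq_catalan, ← Nat.card_eq_fintype_card,
    card_dyckWord_semilength_eq_card_isBallot, ← card_isBallot_pairs_eq_card_isBallot]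
  refine Nat.card_congr (Equiv.subtypeEquivRight fun pq => ?_)
  simp only [isBallot_ofFn_iff, sum_ofFn]
  tauto
end
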